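/- Let A₁,…,A_k, B₁,…,B_k ∈ ℂ^{d×d} and n > 0. Suppose that for all x ∈ ℂ^k, (Σᵢ xᵢ Aᵢ)^{⊗n} · (Σᵢ x̄ᵢ Aᵢᴴ)^{⊗n} = (Σᵢ xᵢ Bᵢ)^{⊗n} · (Σᵢ x̄ᵢ Bᵢᴴ)^{⊗n}. Then there exists a unitary d×d matrix U such that Aᵢ = Bᵢ U for every i. -/

import Mathlib

/-!
Write `M x = ∑ᵢ xᵢ • Aᵢ` and `N x = ∑ᵢ xᵢ • Bᵢ`. Since `P ↦ P^{⊗n}` is multiplicative, the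
hypothesis says `(M x * (M x)ᴴ)^{⊗n} = (N x * (N x)ᴴ)^{⊗n}`, and `P ↦ P^{⊗n}` is injective on
positive semidefinite matrices: the diagonals agree because `(P a a)^n = (Q a a)^n` with both
entries nonnegative, and a nonzero diagonal entry `P j j` recovers each `P a b` from the entry
`P a b * (P j j)^(n-1)` of `P^{⊗n}`. Polarization in `x` turns `M x * (M x)ᴴ = N x * (N x)ᴴ`
into `Aᵢ * Aⱼᴴ = Bᵢ * Bⱼᴴ`, i.e. `X * Xᴴ = Y * Yᴴ` for the matrices `X`, `Y` obtained by stacking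
the `Aᵢ`, resp. the `Bᵢ`. Then `Yᴴ v ↦ Xᴴ v` is a well-defined isometry on the range of `Yᴴ`,
and the matrix `W` of any unitary extension of it satisfies `X = Y * Wᴴ`.
-/

/-- The `n`-fold Kronecker (tensor) power of a `d×d` matrix. -/
def kronPow {d : ℕ} (n : ℕ) (A : Matrix (Fin d) (Fin d) ℂ) :
    Matrix (Fin n → Fin d) (Fin n → Fin d) ℂ :=
  Matrix.of fun f g => ∏ i, A (f i) (g i)

open Matrix ComplexConjugate
open scoped ComplexOrder

section Polarization

variable {ι M : Type*} [Fintype ι] [DecidableEq ι] [AddCommGroup M] [Module ℂ M]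

theorem sum_sum_mul_conj_smul_single_add_single (C : ι → ι → M) (i j : ι) (c : ℂ) :
    ∑ a, ∑ b, ((Pi.single i 1 + Pi.single j c : ι → ℂ) a *
        conj ((Pi.single i 1 + Pi.single j c : ι → ℂ) b)) • C a b
      = C i i + conj c • C i j + c • C j i + (c * conj c) • C j j := by
  simp [Pi.single_apply, apply_ite (starRingEnd ℂ), mul_ite, add_mul, mul_add, add_smul,
    Finset.sum_add_distrib, ite_smul]
  abel

theorem eq_zero_of_forall_sum_sum_mul_conj_smul_eq_zero {C : ι → ι → M}
    (hC : ∀ x : ι → ℂ, ∑ a, ∑ b, (x a * conj (x b)) • C a b = 0) (i j : ι) : C i j = 0 := by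
  have hq (c : ℂ) (i j : ι) := (sum_sum_mul_conj_smul_single_add_single C i j c).symm.trans (hC _)
  have hdiag (i : ι) : C i i = 0 := by simpa using hq 0 i i
  have h1 := hq 1 i j
  have hI := hq Complex.I i j
  simp only [hdiag, map_one, one_smul, Complex.conj_I, zero_add, add_zero, smul_zero] at h1 hI
  have h2I : (2 * Complex.I) • C i j = 0 := by
    linear_combination (norm := module) Complex.I • h1 - hI
  simpa using h2I

end Polarization

theorem Matrix.sum_smul_mul_conjTranspose_sum_smul {ι m n : Type*} [Fintype ι] [Fintype n]
    (x : ι → ℂ) (A B : ι → Matrix m n ℂ) :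
    (∑ i, x i • A i) * (∑ i, x i • B i)ᴴ = ∑ i, ∑ j, (x i * conj (x j)) • (A i * (B j)ᴴ) := by
  simp only [conjTranspose_sum, conjTranspose_smul, Matrix.sum_mul, Matrix.mul_sum, Matrix.smul_mul,
    Matrix.mul_smul, Finset.smul_sum, smul_smul, Complex.star_def]
  exact Finset.sum_comm.trans (by simp only [mul_comm])

theorem Matrix.mul_conjTranspose_eq_of_forall_sum_smul {ι m n : Type*} [Fintype ι] [DecidableEq ι]
    [Fintype n] {A B : ι → Matrix m n ℂ}
    (h : ∀ x : ι → ℂ,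
      (∑ i, x i • A i) * (∑ i, x i • A i)ᴴ = (∑ i, x i • B i) * (∑ i, x i • B i)ᴴ)
    (i j : ι) : A i * (A j)ᴴ = B i * (B j)ᴴ := by
  rw [← sub_eq_zero]
  refine eq_zero_of_forall_sum_sum_mul_conj_smul_eq_zero
    (C := fun i j => A i * (A j)ᴴ - B i * (B j)ᴴ) (fun x => ?_) i j
  simp only [smul_sub, Finset.sum_sub_distrib, ← sum_smul_mul_conjTranspose_sum_smul, h, sub_self]

theorem kronPow_mul {d n : ℕ} (M N : Matrix (Fin d) (Fin d) ℂ) :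
    kronPow n (M * N) = kronPow n M * kronPow n N := by
  ext f g
  simp only [kronPow, of_apply, mul_apply, Finset.prod_univ_sum, Fintype.piFinset_univ,
    Finset.prod_mul_distrib]

theorem kronPow_apply_const {d : ℕ} (n : ℕ) (P : Matrix (Fin d) (Fin d) ℂ) (a b : Fin d) :
    kronPow n P (fun _ => a) (fun _ => b) = P a b ^ n := by
  simp [kronPow]

theorem kronPow_succ_apply_cons {d : ℕ} (m : ℕ) (P : Matrix (Fin d) (Fin d) ℂ) (a b j : Fin d) :
    kronPow (m + 1) P (Fin.cons a fun _ => j) (Fin.cons b fun _ => j) = P a b * P j j ^ m := by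
  simp [kronPow, Fin.prod_univ_succ]

theorem eq_of_kronPow_eq_of_apply_self_eq {d : ℕ} (m : ℕ) {P Q : Matrix (Fin d) (Fin d) ℂ}
    (h : kronPow (m + 1) P = kronPow (m + 1) Q) {j : Fin d} (hj : P j j = Q j j)
    (hj0 : P j j ≠ 0) : P = Q := by
  ext a b
  have hab := kronPow_succ_apply_cons m P a b j
  rw [h, kronPow_succ_apply_cons, ← hj] at hab
  exact (mul_right_cancel₀ (pow_ne_zero m hj0) hab).symm

theorem RCLike.eq_of_pow_eq_pow_of_nonneg {K : Type*} [RCLike K] {z w : K} (hz : 0 ≤ z)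
    (hw : 0 ≤ w) {n : ℕ} (hn : n ≠ 0) (h : z ^ n = w ^ n) : z = w := by
  obtain ⟨x, hx, rfl⟩ := RCLike.nonneg_iff_exists_ofReal.mp hz
  obtain ⟨y, hy, rfl⟩ := RCLike.nonneg_iff_exists_ofReal.mp hw
  norm_cast at h ⊢
  exact (pow_left_inj₀ hx hy hn).mp h

theorem Matrix.PosSemidef.eq_of_kronPow_eq {d n : ℕ} (hn : n ≠ 0)
    {P Q : Matrix (Fin d) (Fin d) ℂ} (hP : P.PosSemidef) (hQ : Q.PosSemidef)
    (h : kronPow n P = kronPow n Q) : P = Q := by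
  have hdiag (a : Fin d) : P a a = Q a a := by
    refine RCLike.eq_of_pow_eq_pow_of_nonneg hP.diag_nonneg hQ.diag_nonneg hn ?_
    rw [← kronPow_apply_const, h, kronPow_apply_const]
  by_cases hzero : ∀ a, P a a = 0
  · have hPQ : P.trace = Q.trace := Finset.sum_congr rfl fun a _ => hdiag a
    have hP0 : P.trace = 0 := Finset.sum_eq_zero fun a _ => hzero a
    rw [hP.trace_eq_zero_iff.mp hP0, hQ.trace_eq_zero_iff.mp (hPQ ▸ hP0)]
  · push Not at hzero
    obtain ⟨j, hj⟩ := hzero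
    obtain ⟨m, rfl⟩ := Nat.exists_eq_succ_of_ne_zero hn
    exact eq_of_kronPow_eq_of_apply_self_eq m h (hdiag j) hj

theorem LinearMap.exists_linearIsometry_comp_eq_of_norm_eq {𝕜 V W : Type*} [RCLike 𝕜]
    [AddCommGroup V] [Module 𝕜 V] [NormedAddCommGroup W] [InnerProductSpace 𝕜 W]
    [FiniteDimensional 𝕜 W] {f g : V →ₗ[𝕜] W} (h : ∀ v, ‖f v‖ = ‖g v‖) :
    ∃ L : W →ₗᵢ[𝕜] W, ∀ v, L (g v) = f v := by
  have hker : LinearMap.ker g ≤ LinearMap.ker f := fun v hv => by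
    rw [LinearMap.mem_ker, ← norm_eq_zero, h, norm_eq_zero]
    exact hv
  set T : LinearMap.range g →ₗ[𝕜] W :=
    (LinearMap.ker g).liftQ f hker ∘ₗ (g.quotKerEquivRange).symm.toLinearMap
  have hT (v : V) : T ⟨g v, LinearMap.mem_range_self g v⟩ = f v := by
    simp [T, LinearMap.quotKerEquivRange_symm_apply_image]
  have hTnorm : ∀ s, ‖T s‖ = ‖s‖ := by
    rintro ⟨_, v, rfl⟩
    rw [hT, h]
    rfl
  refine ⟨LinearIsometry.extend ⟨T, hTnorm⟩, fun v => ?_⟩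
  exact (LinearIsometry.extend_apply _ ⟨g v, LinearMap.mem_range_self g v⟩).trans (hT v)

theorem Matrix.norm_toEuclideanLin_conjTranspose_sq {𝕜 m n : Type*} [RCLike 𝕜] [Fintype m]
    [DecidableEq m] [Fintype n] [DecidableEq n] (X : Matrix m n 𝕜) (v : EuclideanSpace 𝕜 m) :
    ‖toEuclideanLin Xᴴ v‖ ^ 2 = RCLike.re (inner 𝕜 v (toEuclideanLin (X * Xᴴ) v)) := by
  rw [toLpLin_mul_same, LinearMap.comp_apply, @norm_sq_eq_re_inner 𝕜,
    toEuclideanLin_conjTranspose_eq_adjoint, LinearMap.adjoint_inner_left]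

theorem Matrix.exists_unitary_eq_mul_of_mul_conjTranspose_eq {𝕜 m n : Type*} [RCLike 𝕜]
    [Fintype m] [DecidableEq m] [Fintype n] [DecidableEq n] {X Y : Matrix m n 𝕜}
    (h : X * Xᴴ = Y * Yᴴ) : ∃ U ∈ unitaryGroup n 𝕜, X = Y * U := by
  obtain ⟨L, hL⟩ := LinearMap.exists_linearIsometry_comp_eq_of_norm_eq
    (f := toEuclideanLin Xᴴ) (g := toEuclideanLin Yᴴ) fun v => by
      rw [← sq_eq_sq₀ (norm_nonneg _) (norm_nonneg _), norm_toEuclideanLin_conjTranspose_sq,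
        norm_toEuclideanLin_conjTranspose_sq, h]
  set W : Matrix n n 𝕜 := toEuclideanLin.symm L.toLinearMap
  have hW : toEuclideanLin W = L.toLinearMap := toEuclideanLin.apply_symm_apply _
  have hWY : W * Yᴴ = Xᴴ := toEuclideanLin.injective <| by
    ext1 v
    simp [hW, hL]
  have hWW : Wᴴ * W = 1 := toEuclideanLin.injective <| by
    rw [toLpLin_mul_same, toEuclideanLin_conjTranspose_eq_adjoint, hW, L.adjoint_comp_self',
      toLpLin_one]
  refine ⟨Wᴴ, ?_, ?_⟩
  · rwa [mem_unitaryGroup_iff, star_eq_conjTranspose, conjTranspose_conjTranspose]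
  · simpa using congrArg conjTranspose hWY.symm

theorem Matrix.exists_unitary_forall_eq_mul_of_mul_conjTranspose_eq {𝕜 ι m n : Type*} [RCLike 𝕜]
    [Fintype ι] [Fintype m] [DecidableEq m] [Fintype n] [DecidableEq n]
    {A B : ι → Matrix m n 𝕜} (h : ∀ i j, A i * (A j)ᴴ = B i * (B j)ᴴ) :
    ∃ U ∈ unitaryGroup n 𝕜, ∀ i, A i = B i * U := by
  classical
  obtain ⟨U, hU, hXY⟩ := exists_unitary_eq_mul_of_mul_conjTranspose_eq
    (X := of fun p : ι × m => A p.1 p.2) (Y := of fun p : ι × m => B p.1 p.2) <| by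
      ext p q
      simpa [mul_apply] using congrFun₂ (h p.1 q.1) p.2 q.2
  exact ⟨U, hU, fun i => by ext a c; simpa [mul_apply] using congrFun₂ hXY (i, a) c⟩

/-- If `(Σᵢ xᵢ Aᵢ)^{⊗n} (Σᵢ x̄ᵢ Aᵢᴴ)^{⊗n} = (Σᵢ xᵢ Bᵢ)^{⊗n} (Σᵢ x̄ᵢ Bᵢᴴ)^{⊗n}`
for all `x ∈ ℂᵏ`, then `Aᵢ = Bᵢ U` for a single unitary `U` and every `i`. -/
theorem stmt3 {d k : ℕ} (n : ℕ) (hn : 0 < n)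
    (A B : Fin k → Matrix (Fin d) (Fin d) ℂ)
    (h : ∀ x : Fin k → ℂ,
      kronPow n (∑ i, x i • A i) *
        kronPow n (∑ i, (starRingEnd ℂ) (x i) • (A i).conjTranspose)
      = kronPow n (∑ i, x i • B i) *
        kronPow n (∑ i, (starRingEnd ℂ) (x i) • (B i).conjTranspose)) :
    ∃ U : Matrix (Fin d) (Fin d) ℂ, U ∈ Matrix.unitaryGroup (Fin d) ℂ ∧
      ∀ i, A i = B i * U := by
  have hgram (x : Fin k → ℂ) :
      (∑ i, x i • A i) * (∑ i, x i • A i)ᴴ = (∑ i, x i • B i) * (∑ i, x i • B i)ᴴ := by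
    refine (posSemidef_self_mul_conjTranspose _).eq_of_kronPow_eq hn.ne'
      (posSemidef_self_mul_conjTranspose _) ?_
    simpa only [kronPow_mul, conjTranspose_sum, conjTranspose_smul, Complex.star_def] using h x
  exact exists_unitary_forall_eq_mul_of_mul_conjTranspose_eq
    (mul_conjTranspose_eq_of_forall_sum_smul hgram)
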